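/- arXiv:2601.07503 — 7 statements merged into one kernel-verified Lean document; each statement's English description precedes it below -/
import Mathlib

section
/- With the notation of the context, for every θ = (α,β) ∈ Θ and all (x,y) ∈ E × E, the deviation satisfies Δ(θ,x,y) = c₁(θ*,θ)·(G⁰ − F⁰⊗F⁰)(x,y) + c₂(θ*,θ)·((F¹−F⁰)⊗(F¹−F⁰))(x,y), where c₁(θ*,θ) = −2r* + r*b* + 2r − rb and c₂(θ*,θ) = (r*/r)(b*r − r*b). -/
/-! Both `G` and the fitted kernel are instances of one bilinear model: writing `D = F¹ − F⁰`,
the weights only depend on `(r, b)`, and with second function `F⁰ + K D` the model equals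
`G⁰ − (2r − rb)(G⁰ − F⁰⊗F⁰) + K r (F⁰⊗D + D⊗F⁰) + r b K² D⊗D`. Since `F¹_θ = F⁰ + (r*/r) D`,
the cross terms `K r` agree for `θ*` (`K = 1`) and `θ` (`K = r*/r`) and cancel in `Δ`. -/

lemma mixture_weights {α β r b : ℝ} (h : α + β ≠ 0) (hr : r = α / (α + β)) (hb : b = 1 - β) :
    β / (α + β) = 1 - r ∧ β * (1 - α) / (α + β) = 1 - 2 * r + r * b ∧
      α * β / (α + β) = r * (1 - b) ∧ α * (1 - β) / (α + β) = r * b := by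
  subst hr hb
  refine ⟨?_, ?_, ?_, ?_⟩ <;> field_simp <;> ring

section MixtureKernel

variable {E : Type*}

def mixtureKernel (r b : ℝ) (G0 : E × E → ℝ) (F0 H : E → ℝ) (x y : E) : ℝ :=
  (1 - 2 * r + r * b) * G0 (x, y) + r * (1 - b) * F0 x * H y + r * (1 - b) * H x * F0 y
    + r * b * H x * H y

lemma mixtureKernel_of_eq_add_mul {r b K : ℝ} {G0 : E × E → ℝ} {F0 H D : E → ℝ}
    (hH : ∀ z, H z = F0 z + K * D z) (x y : E) :
    mixtureKernel r b G0 F0 H x y = G0 (x, y) - (2 * r - r * b) * (G0 (x, y) - F0 x * F0 y)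
      + K * r * (F0 x * D y + D x * F0 y) + r * b * K ^ 2 * (D x * D y) := by
  simp only [mixtureKernel, hH]
  ring

end MixtureKernel

theorem deviation_decomposition_general
    {E : Type*} (δ : ℝ) (hδ0 : 0 < δ)
    (α β αs βs : ℝ)
    (hα : α ∈ Set.Icc δ (1-δ)) (hβ : β ∈ Set.Icc δ (1-δ))
    (hαs : αs ∈ Set.Icc δ (1-δ)) (hβs : βs ∈ Set.Icc δ (1-δ))
    (F0 F1 : E → ℝ) (G0 : E × E → ℝ)
    (p r b : ℝ) (hp : p = β/(α+β)) (hr : r = α/(α+β)) (hb : b = 1-β)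
    (l1 l2 l3 l4 : ℝ)
    (hl1 : l1 = β*(1-α)/(α+β)) (hl2 : l2 = α*β/(α+β))
    (hl3 : l3 = α*β/(α+β)) (hl4 : l4 = α*(1-β)/(α+β))
    (ps rs bs : ℝ) (hps : ps = βs/(αs+βs)) (hrs : rs = αs/(αs+βs)) (hbs : bs = 1-βs)
    (ls1 ls2 ls3 ls4 : ℝ)
    (hls1 : ls1 = βs*(1-αs)/(αs+βs)) (hls2 : ls2 = αs*βs/(αs+βs))
    (hls3 : ls3 = αs*βs/(αs+βs)) (hls4 : ls4 = αs*(1-βs)/(αs+βs))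
    (F : E → ℝ) (hF : ∀ x, F x = ps * F0 x + rs * F1 x)
    (G : E × E → ℝ)
    (hG : ∀ x y, G (x,y) = ls1 * G0 (x,y) + ls2 * F0 x * F1 y
        + ls3 * F1 x * F0 y + ls4 * F1 x * F1 y)
    (F1θ : E → ℝ) (hF1θ : ∀ x, F1θ x = (F x - p * F0 x)/r)
    (Δ : E → E → ℝ)
    (hΔ : ∀ x y, Δ x y = G (x,y) - (l1 * G0 (x,y) + l2 * F0 x * F1θ y
        + l3 * F1θ x * F0 y + l4 * F1θ x * F1θ y))
    (c1 c2 : ℝ)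
    (hc1 : c1 = -2*rs + rs*bs + 2*r - r*b)
    (hc2 : c2 = (rs/r)*(bs*r - rs*b)) :
    ∀ x y : E, Δ x y = c1 * (G0 (x,y) - F0 x * F0 y)
      + c2 * ((F1 x - F0 x) * (F1 y - F0 y)) := by
  have hα0 : 0 < α := hδ0.trans_le hα.1
  have hsum : α + β ≠ 0 := (add_pos hα0 (hδ0.trans_le hβ.1)).ne'
  have hsums : αs + βs ≠ 0 := (add_pos (hδ0.trans_le hαs.1) (hδ0.trans_le hβs.1)).ne'
  have hr0 : r ≠ 0 := hr ▸ div_ne_zero hα0.ne' hsum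
  obtain ⟨hp', hl1', hl2', hl4'⟩ := mixture_weights hsum hr hb
  obtain ⟨hps', hls1', hls2', hls4'⟩ := mixture_weights hsums hrs hbs
  have hF1θ' (z : E) : F1θ z = F0 z + rs / r * (F1 - F0) z := by
    rw [hF1θ, hF, hps, hps', hp, hp', Pi.sub_apply]
    field_simp
    ring
  have hF1 (z : E) : F1 z = F0 z + 1 * (F1 - F0) z := by
    rw [Pi.sub_apply]
    ring
  intro x y
  have hΔk : Δ x y = mixtureKernel rs bs G0 F0 F1 x y - mixtureKernel r b G0 F0 F1θ x y := by
    rw [hΔ, hG, hl1, hl2, hl3, hl4, hls1, hls2, hls3, hls4, hl1', hl2', hl4', hls1', hls2',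
      hls4', mixtureKernel, mixtureKernel]
  rw [hΔk, mixtureKernel_of_eq_add_mul hF1, mixtureKernel_of_eq_add_mul hF1θ', hc1, hc2,
    Pi.sub_apply, Pi.sub_apply]
  field_simp
  ring

/-- Proposition 1 (decomposition part): the deviation Δ(θ,·) decomposes as
    c₁(θ*,θ)·(G⁰ − F⁰⊗F⁰) + c₂(θ*,θ)·((F¹−F⁰)⊗(F¹−F⁰)). -/
theorem deviation_decomposition
    {E : Type*} (δ : ℝ) (hδ0 : 0 < δ) (hδ : δ < 1/2)
    (α β αs βs : ℝ)
    (hα : α ∈ Set.Icc δ (1-δ)) (hβ : β ∈ Set.Icc δ (1-δ))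
    (hαs : αs ∈ Set.Icc δ (1-δ)) (hβs : βs ∈ Set.Icc δ (1-δ))
    (F0 F1 : E → ℝ) (G0 : E × E → ℝ)
    (p r b : ℝ) (hp : p = β/(α+β)) (hr : r = α/(α+β)) (hb : b = 1-β)
    (l1 l2 l3 l4 : ℝ)
    (hl1 : l1 = β*(1-α)/(α+β)) (hl2 : l2 = α*β/(α+β))
    (hl3 : l3 = α*β/(α+β)) (hl4 : l4 = α*(1-β)/(α+β))
    (ps rs bs : ℝ) (hps : ps = βs/(αs+βs)) (hrs : rs = αs/(αs+βs)) (hbs : bs = 1-βs)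
    (ls1 ls2 ls3 ls4 : ℝ)
    (hls1 : ls1 = βs*(1-αs)/(αs+βs)) (hls2 : ls2 = αs*βs/(αs+βs))
    (hls3 : ls3 = αs*βs/(αs+βs)) (hls4 : ls4 = αs*(1-βs)/(αs+βs))
    (F : E → ℝ) (hF : ∀ x, F x = ps * F0 x + rs * F1 x)
    (G : E × E → ℝ)
    (hG : ∀ x y, G (x,y) = ls1 * G0 (x,y) + ls2 * F0 x * F1 y
        + ls3 * F1 x * F0 y + ls4 * F1 x * F1 y)
    (F1θ : E → ℝ) (hF1θ : ∀ x, F1θ x = (F x - p * F0 x)/r)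
    (Δ : E → E → ℝ)
    (hΔ : ∀ x y, Δ x y = G (x,y) - (l1 * G0 (x,y) + l2 * F0 x * F1θ y
        + l3 * F1θ x * F0 y + l4 * F1θ x * F1θ y))
    (c1 c2 : ℝ)
    (hc1 : c1 = -2*rs + rs*bs + 2*r - r*b)
    (hc2 : c2 = (rs/r)*(bs*r - rs*b)) :
    ∀ x y : E, Δ x y = c1 * (G0 (x,y) - F0 x * F0 y)
      + c2 * ((F1 x - F0 x) * (F1 y - F0 y)) :=
  deviation_decomposition_general δ hδ0 α β αs βs hα hβ hαs hβs F0 F1 G0 p r b hp hr hb l1 l2 l3 l4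
    hl1 hl2 hl3 hl4 ps rs bs hps hrs hbs ls1 ls2 ls3 ls4 hls1 hls2 hls3 hls4 F hF G hG F1θ hF1θ Δ hΔ
    c1 c2 hc1 hc2
end

section
/- Let 0 < δ < 1/2 and let (α,β), (α*,β*) ∈ [δ, 1−δ]². Set r = α/(α+β), b = 1−β, r* = α*/(α*+β*), b* = 1−β*, and define c₁ = −2r* + r*b* + 2r − rb and c₂ = (r*/r)(b*r − r*b). If c₁ = 0 and c₂ = 0, then (α,β) = (α*,β*). -/
/-!
Writing `b = 1 - β`, the two equations say `r (2 - b) = r* (2 - b*)` and `b* r = r* b`.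
Eliminating `r*` gives `r (b* - b) (2 - b - b*) = 0`, and `2 - b - b* = β + β* > 0`, so
`β = β*`; then `r = r*`, and `α` is recovered from `r` because `x ↦ x / (x + β)` is injective.
-/

theorem eq_and_eq_of_mul_two_sub_eq_of_mul_eq {K : Type*} [Field K] {r b rs bs : K}
    (hr : r ≠ 0) (hbb : b + bs ≠ 2)
    (h₁ : r * (2 - b) = rs * (2 - bs)) (h₂ : bs * r = rs * b) :
    b = bs ∧ r = rs := by
  have hb : b = bs := by
    have : r * ((bs - b) * (2 - b - bs)) = 0 := by linear_combination (2 - bs) * h₂ - b * h₁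
    rcases mul_eq_zero.mp this with h | h
    · exact absurd h hr
    rcases mul_eq_zero.mp h with h | h
    · exact (sub_eq_zero.mp h).symm
    · exact absurd (by linear_combination -h) hbb
  subst hb
  refine ⟨rfl, ?_⟩
  by_contra hne
  have h2 : 2 - b = 0 :=
    (mul_eq_zero.mp (by linear_combination h₁ : (r - rs) * (2 - b) = 0)).resolve_left
      (sub_ne_zero.mpr hne)
  have h0 : b = 0 :=
    (mul_eq_zero.mp (by linear_combination h₂ : b * (r - rs) = 0)).resolve_right
      (sub_ne_zero.mpr hne)
  exact hbb (by linear_combination -h2 + h0)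

theorem eq_of_div_add_eq_div_add {K : Type*} [Field K] {x y c : K}
    (hc : c ≠ 0) (hx : x + c ≠ 0) (hy : y + c ≠ 0) (h : x / (x + c) = y / (y + c)) :
    x = y := by
  rw [div_eq_div_iff hx hy] at h
  exact mul_right_cancel₀ hc (by linear_combination h)

theorem c1_c2_zero_implies_eq_general
    (δ α β αs βs : ℝ) (hδ0 : 0 < δ)
    (hα : α ∈ Set.Icc δ (1-δ)) (hβ : β ∈ Set.Icc δ (1-δ))
    (hαs : αs ∈ Set.Icc δ (1-δ)) (hβs : βs ∈ Set.Icc δ (1-δ))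
    (r b rs bs c1 c2 : ℝ)
    (hr : r = α/(α+β)) (hb : b = 1-β)
    (hrs : rs = αs/(αs+βs)) (hbs : bs = 1-βs)
    (hc1 : c1 = -2*rs + rs*bs + 2*r - r*b)
    (hc2 : c2 = (rs/r)*(bs*r - rs*b))
    (h1 : c1 = 0) (h2 : c2 = 0) :
    (α, β) = (αs, βs) := by
  have hα0 : 0 < α := hδ0.trans_le hα.1
  have hβ0 : 0 < β := hδ0.trans_le hβ.1
  have hαs0 : 0 < αs := hδ0.trans_le hαs.1
  have hβs0 : 0 < βs := hδ0.trans_le hβs.1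
  have hr0 : r ≠ 0 := by rw [hr]; positivity
  have hrs0 : rs ≠ 0 := by rw [hrs]; positivity
  have e₁ : r * (2 - b) = rs * (2 - bs) := by linear_combination h1 - hc1
  have e₂ : bs * r = rs * b := by
    rw [h2, eq_comm, mul_eq_zero, or_iff_right (div_ne_zero hrs0 hr0), sub_eq_zero] at hc2
    exact hc2
  obtain ⟨hbb, hrr⟩ := eq_and_eq_of_mul_two_sub_eq_of_mul_eq hr0 (by linarith) e₁ e₂
  have hββ : β = βs := by linarith
  subst hββ
  rw [hr, hrs] at hrr
  rw [eq_of_div_add_eq_div_add hβ0.ne' (by positivity) (by positivity) hrr]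

/-- Proposition 1 (identifiability part): vanishing of c₁ and c₂ forces θ = θ*. -/
theorem c1_c2_zero_implies_eq
    (δ α β αs βs : ℝ) (hδ0 : 0 < δ) (hδ : δ < 1/2)
    (hα : α ∈ Set.Icc δ (1-δ)) (hβ : β ∈ Set.Icc δ (1-δ))
    (hαs : αs ∈ Set.Icc δ (1-δ)) (hβs : βs ∈ Set.Icc δ (1-δ))
    (r b rs bs c1 c2 : ℝ)
    (hr : r = α/(α+β)) (hb : b = 1-β)
    (hrs : rs = αs/(αs+βs)) (hbs : bs = 1-βs)
    (hc1 : c1 = -2*rs + rs*bs + 2*r - r*b)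
    (hc2 : c2 = (rs/r)*(bs*r - rs*b))
    (h1 : c1 = 0) (h2 : c2 = 0) :
    (α, β) = (αs, βs) :=
  c1_c2_zero_implies_eq_general δ α β αs βs hδ0 hα hβ hαs hβs r b rs bs c1 c2 hr hb hrs hbs hc1 hc2
    h1 h2
end

section
/- Assume that the two functions T₁ = G⁰ − F⁰⊗F⁰ and T₂' = (F¹−F⁰)⊗(F¹−F⁰) are linearly independent in the real vector space of functions E × E → ℝ. Then for every θ ∈ Θ: Δ(θ,x,y) = 0 for all (x,y) ∈ E × E if and only if θ = θ*. Equivalently, the sup-discrepancy s(θ) = sup_{(x,y)} |Δ(θ,x,y)| vanishes if and only if θ = θ*. -/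
/-!
Since `p + r = 1`, the recovered component is `F¹_θ = F⁰ + (r*/r) (F¹ - F⁰)`. As
`λ₁ + λ₂ + λ₃ + λ₄ = 1` and `λ₂ + λ₄ = λ₃ + λ₄ = r`, expanding both bilinear models around
`F⁰ ⊗ F⁰` gives `Δ(θ) = (λ₁* - λ₁) T₁ + r*² (κ* - κ) T₂'` with `κ = λ₄ / r² = (1 - β)(α + β) / α`.
Linear independence kills both coefficients, and `θ ↦ (λ₁, κ)` is injective on `(0, ∞)²`:
clearing denominators and subtracting gives `(α β* - α* β)(β + β*) = 0`, so `β / α = β* / α*`,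
and then `κ = (1 - β)(1 + β / α)` determines `β`, hence `α`.
-/

theorem bilinear_mix_eq_centered {R : Type*} [CommRing R] {l₁ l₂ l₃ l₄ r g u v s t : R}
    (hsum : l₁ + l₂ + l₃ + l₄ = 1) (h₂ : l₂ + l₄ = r) (h₃ : l₃ + l₄ = r) :
    l₁ * g + l₂ * u * t + l₃ * s * v + l₄ * s * t
      = l₁ * (g - u * v) + u * v + r * (u * (t - v) + (s - u) * v)
        + l₄ * ((s - u) * (t - v)) := by
  linear_combination u * v * hsum + u * (t - v) * h₂ + (s - u) * v * h₃

theorem sub_div_sub_eq_div_mul_sub {K : Type*} [Field K] {p r p' r' a b : K} (hr : r ≠ 0)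
    (h : p + r = 1) (h' : p' + r' = 1) :
    (p' * a + r' * b - p * a) / r - a = r' / r * (b - a) := by
  field_simp
  linear_combination a * h' - a * h

namespace Theta

variable (α β : ℝ)

noncomputable def p : ℝ := β / (α + β)
noncomputable def r : ℝ := α / (α + β)
noncomputable def lam₁ : ℝ := β * (1 - α) / (α + β)
-- `λ₂ = λ₃`
noncomputable def lam₂ : ℝ := α * β / (α + β)
noncomputable def lam₄ : ℝ := α * (1 - β) / (α + β)
noncomputable def kappa : ℝ := (1 - β) * (α + β) / α

variable {α β}

theorem p_add_r (h : α + β ≠ 0) : p α β + r α β = 1 := by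
  rw [p, r, ← add_div, add_comm, div_self h]

theorem lam_sum (h : α + β ≠ 0) : lam₁ α β + lam₂ α β + lam₂ α β + lam₄ α β = 1 := by
  simp only [lam₁, lam₂, lam₄]
  field_simp
  ring

theorem lam₂_add_lam₄ (h : α + β ≠ 0) : lam₂ α β + lam₄ α β = r α β := by
  simp only [lam₂, lam₄, r]
  field_simp
  ring

theorem lam₄_eq_kappa_mul (hα : α ≠ 0) (h : α + β ≠ 0) : lam₄ α β = kappa α β * r α β ^ 2 := by
  simp only [lam₄, kappa, r]
  field_simp

theorem eq_of_lam₁_eq_of_kappa_eq {α' β' : ℝ} (hα : 0 < α) (hβ : 0 < β) (hα' : 0 < α')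
    (hβ' : 0 < β') (h₁ : lam₁ α β = lam₁ α' β') (hκ : kappa α β = kappa α' β') :
    α = α' ∧ β = β' := by
  simp only [lam₁, kappa] at h₁ hκ
  field_simp at h₁ hκ
  have hprod : (α * β' - α' * β) * (β + β') = 0 := by linear_combination hκ - h₁
  have hratio : α * β' = α' * β := by
    have := (mul_eq_zero.1 hprod).resolve_right (by positivity)
    linarith
  have hβeq : β = β' := by
    have h : α' * (α + β) * (1 - β) = α' * (α + β) * (1 - β') := by
      linear_combination hκ + (1 - β') * hratio
    have := mul_left_cancel₀ (by positivity) h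
    linarith
  subst hβeq
  exact ⟨mul_right_cancel₀ hβ.ne' hratio, rfl⟩

theorem deviation_eq {α' β' : ℝ} (hα : α ≠ 0) (h : α + β ≠ 0) (hα' : α' ≠ 0) (h' : α' + β' ≠ 0)
    {g u v s t s' t' : ℝ} (hs : s' - u = r α' β' / r α β * (s - u))
    (ht : t' - v = r α' β' / r α β * (t - v)) :
    lam₁ α' β' * g + lam₂ α' β' * u * t + lam₂ α' β' * s * v + lam₄ α' β' * s * t
      - (lam₁ α β * g + lam₂ α β * u * t' + lam₂ α β * s' * v + lam₄ α β * s' * t')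
      = (lam₁ α' β' - lam₁ α β) * (g - u * v)
        + r α' β' ^ 2 * (kappa α' β' - kappa α β) * ((s - u) * (t - v)) := by
  have hr : r α β ≠ 0 := div_ne_zero hα h
  rw [bilinear_mix_eq_centered (lam_sum h') (lam₂_add_lam₄ h') (lam₂_add_lam₄ h'),
    bilinear_mix_eq_centered (lam_sum h) (lam₂_add_lam₄ h) (lam₂_add_lam₄ h), hs, ht,
    lam₄_eq_kappa_mul hα h, lam₄_eq_kappa_mul hα' h']
  field_simp
  ring

end Theta

theorem deviation_zero_iff_of_linearIndependent_general
    {E : Type*} (δ : ℝ) (hδ0 : 0 < δ)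
    (F0 F1 : E → ℝ) (G0 : E × E → ℝ)
    (αs βs : ℝ) (hαs : αs ∈ Set.Icc δ (1-δ)) (hβs : βs ∈ Set.Icc δ (1-δ))
    (F : E → ℝ) (hF : ∀ x, F x = (βs/(αs+βs)) * F0 x + (αs/(αs+βs)) * F1 x)
    (G : E × E → ℝ)
    (hG : ∀ x y, G (x,y) = (βs*(1-αs)/(αs+βs)) * G0 (x,y)
        + (αs*βs/(αs+βs)) * F0 x * F1 y
        + (αs*βs/(αs+βs)) * F1 x * F0 y
        + (αs*(1-βs)/(αs+βs)) * F1 x * F1 y)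
    (F1θ : ℝ × ℝ → E → ℝ)
    (hF1θ : ∀ (α β : ℝ) (x : E),
      F1θ (α, β) x = (F x - (β/(α+β)) * F0 x) / (α/(α+β)))
    (Δ : ℝ × ℝ → E × E → ℝ)
    (hΔ : ∀ (α β : ℝ) (x y : E),
      Δ (α, β) (x, y) = G (x,y) - ((β*(1-α)/(α+β)) * G0 (x,y)
        + (α*β/(α+β)) * F0 x * F1θ (α, β) y
        + (α*β/(α+β)) * F1θ (α, β) x * F0 y
        + (α*(1-β)/(α+β)) * F1θ (α, β) x * F1θ (α, β) y))
    (hLinInd : LinearIndependent ℝ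
      ![fun z : E × E => G0 z - F0 z.1 * F0 z.2,
        fun z : E × E => (F1 z.1 - F0 z.1) * (F1 z.2 - F0 z.2)]) :
    ∀ θ ∈ Set.Icc δ (1-δ) ×ˢ Set.Icc δ (1-δ),
      ((∀ z : E × E, Δ θ z = 0) ↔ θ = (αs, βs)) := by
  open Theta in
  rintro ⟨α, β⟩ ⟨hα, hβ⟩
  have pos {a : ℝ} (ha : a ∈ Set.Icc δ (1 - δ)) : 0 < a := hδ0.trans_le ha.1
  have hα0 := pos hα; have hβ0 := pos hβ; have hαs0 := pos hαs; have hβs0 := pos hβs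
  have hS : α + β ≠ 0 := by positivity
  have hSs : αs + βs ≠ 0 := by positivity
  have hrec (x : E) : F1θ (α, β) x - F0 x = r αs βs / r α β * (F1 x - F0 x) := by
    rw [hF1θ, hF]
    exact sub_div_sub_eq_div_mul_sub (by positivity) (p_add_r hS) (p_add_r hSs)
  have hdev : Δ (α, β) = (lam₁ αs βs - lam₁ α β) • (fun z : E × E => G0 z - F0 z.1 * F0 z.2)
      + (r αs βs ^ 2 * (kappa αs βs - kappa α β))
        • (fun z : E × E => (F1 z.1 - F0 z.1) * (F1 z.2 - F0 z.2)) := by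
    ext ⟨x, y⟩
    rw [hΔ, hG]
    exact deviation_eq hα0.ne' hS hαs0.ne' hSs (hrec x) (hrec y)
  constructor
  · intro h0
    obtain ⟨h₁, hκ⟩ := hLinInd.eq_zero_of_pair (hdev ▸ funext h0)
    have hr : r αs βs ^ 2 ≠ 0 := by unfold r; positivity
    obtain ⟨rfl, rfl⟩ := eq_of_lam₁_eq_of_kappa_eq hα0 hβ0 hαs0 hβs0 (sub_eq_zero.1 h₁).symm
      (sub_eq_zero.1 ((mul_eq_zero.1 hκ).resolve_left hr)).symm
    rfl
  · rintro ⟨⟩ z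
    simp [hdev]

/-- Under linear independence of G⁰ − F⁰⊗F⁰ and (F¹−F⁰)⊗(F¹−F⁰), the deviation
    Δ(θ,·) vanishes identically iff θ = θ*. -/
theorem deviation_zero_iff_of_linearIndependent
    {E : Type*} (δ : ℝ) (hδ0 : 0 < δ) (hδ : δ < 1/2)
    (F0 F1 : E → ℝ) (G0 : E × E → ℝ)
    (αs βs : ℝ) (hαs : αs ∈ Set.Icc δ (1-δ)) (hβs : βs ∈ Set.Icc δ (1-δ))
    (F : E → ℝ) (hF : ∀ x, F x = (βs/(αs+βs)) * F0 x + (αs/(αs+βs)) * F1 x)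
    (G : E × E → ℝ)
    (hG : ∀ x y, G (x,y) = (βs*(1-αs)/(αs+βs)) * G0 (x,y)
        + (αs*βs/(αs+βs)) * F0 x * F1 y
        + (αs*βs/(αs+βs)) * F1 x * F0 y
        + (αs*(1-βs)/(αs+βs)) * F1 x * F1 y)
    (F1θ : ℝ × ℝ → E → ℝ)
    (hF1θ : ∀ (α β : ℝ) (x : E),
      F1θ (α, β) x = (F x - (β/(α+β)) * F0 x) / (α/(α+β)))
    (Δ : ℝ × ℝ → E × E → ℝ)
    (hΔ : ∀ (α β : ℝ) (x y : E),
      Δ (α, β) (x, y) = G (x,y) - ((β*(1-α)/(α+β)) * G0 (x,y)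
        + (α*β/(α+β)) * F0 x * F1θ (α, β) y
        + (α*β/(α+β)) * F1θ (α, β) x * F0 y
        + (α*(1-β)/(α+β)) * F1θ (α, β) x * F1θ (α, β) y))
    (hLinInd : LinearIndependent ℝ
      ![fun z : E × E => G0 z - F0 z.1 * F0 z.2,
        fun z : E × E => (F1 z.1 - F0 z.1) * (F1 z.2 - F0 z.2)]) :
    ∀ θ ∈ Set.Icc δ (1-δ) ×ˢ Set.Icc δ (1-δ),
      ((∀ z : E × E, Δ θ z = 0) ↔ θ = (αs, βs)) :=
  deviation_zero_iff_of_linearIndependent_general δ hδ0 F0 F1 G0 αs βs hαs hβs F hF G hG F1θ hF1θ Δ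
    hΔ hLinInd
end

section
/- Assume F⁰ and F̂ take values in [0,1] and G⁰ takes values in [0,1]. Then for all θ = (α,β) and θ' = (α',β') in Θ = [δ,1−δ]² and all (x,y) ∈ E × E, |Δₙ(θ,x,y) − Δₙ(θ',x,y)| ≤ 2δ⁻³ (|α−α'| + |β−β'|). -/
/-!
Substituting `F̂¹ = ((α + β) F̂ - β F⁰) / α` turns the bracket in `Δₙ` into a combination of
`G⁰(x,y)`, `F⁰(x) F̂(y) + F̂(x) F⁰(y)`, `F̂(x) F̂(y)` and `F⁰(x) F⁰(y)`, which lie in `[0,1]`,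
`[0,2]`, `[0,1]`, `[0,1]`, with coefficients `β(1-α)/(α+β)`, `β(α+β-1)/α`, `(1-β)(α+β)/α` and
`β²(1-2α-β)/(α(α+β))`. Each coefficient is a product of affine functions of `θ` and of `1/α`,
`1/(α+β)`; on `Θ` all these factors are bounded and Lipschitz for the ℓ¹ distance (using
`α ≥ δ`, `α + β ≥ 2δ`), so the product rule `|fg - f'g'| ≤ |f - f'| |g| + |f'| |g - g'|` bounds
the Lipschitz constant of each coefficient. Weighted by the ranges of the data, these constants
add up to at most `2δ⁻³`.
-/

open Set

theorem abs_affine_sub_le (p q : ℝ) (θ θ' : WithLp 1 (ℝ × ℝ)) :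
    |(p * θ.fst + q * θ.snd) - (p * θ'.fst + q * θ'.snd)| ≤ max |p| |q| * dist θ θ' := by
  rw [WithLp.prod_dist_eq_of_L1, Real.dist_eq, Real.dist_eq, mul_add]
  calc |(p * θ.fst + q * θ.snd) - (p * θ'.fst + q * θ'.snd)|
      = |p * (θ.fst - θ'.fst) + q * (θ.snd - θ'.snd)| := by ring_nf
    _ ≤ |p| * |θ.fst - θ'.fst| + |q| * |θ.snd - θ'.snd| := by
      rw [← abs_mul, ← abs_mul]; exact abs_add_le _ _
    _ ≤ _ := by gcongr; exacts [le_max_left _ _, le_max_right _ _]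

structure BoundedLipschitzOn {X : Type*} [PseudoMetricSpace X] (L M : ℝ) (f : X → ℝ)
    (s : Set X) : Prop where
  abs_le : ∀ x ∈ s, |f x| ≤ M
  abs_sub_le : ∀ x ∈ s, ∀ y ∈ s, |f x - f y| ≤ L * dist x y

namespace BoundedLipschitzOn

section

variable {X : Type*} [PseudoMetricSpace X] {s : Set X} {f g : X → ℝ} {L L' M M' m : ℝ}

theorem mul (hf : BoundedLipschitzOn L M f s) (hg : BoundedLipschitzOn L' M' g s) :
    BoundedLipschitzOn (L * M' + M * L') (M * M') (fun x => f x * g x) s where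
  abs_le x hx := by
    rw [abs_mul]
    exact mul_le_mul (hf.abs_le x hx) (hg.abs_le x hx) (abs_nonneg _)
      ((abs_nonneg _).trans (hf.abs_le x hx))
  abs_sub_le x hx y hy := by
    have hfxy := hf.abs_sub_le x hx y hy
    have hfy := hf.abs_le y hy
    calc |f x * g x - f y * g y| = |(f x - f y) * g x + f y * (g x - g y)| := by ring_nf
      _ ≤ |f x - f y| * |g x| + |f y| * |g x - g y| := by
        rw [← abs_mul, ← abs_mul]; exact abs_add_le _ _
      _ ≤ L * dist x y * M' + M * (L' * dist x y) :=
        add_le_add (mul_le_mul hfxy (hg.abs_le x hx) (abs_nonneg _) ((abs_nonneg _).trans hfxy))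
          (mul_le_mul hfy (hg.abs_sub_le x hx y hy) (abs_nonneg _) ((abs_nonneg _).trans hfy))
      _ = (L * M' + M * L') * dist x y := by ring

theorem inv (hf : BoundedLipschitzOn L M f s) (hm : 0 < m) (hfm : ∀ x ∈ s, m ≤ f x) :
    BoundedLipschitzOn (L / m ^ 2) m⁻¹ (fun x => (f x)⁻¹) s where
  abs_le x hx := by
    have hfx := hm.trans_le (hfm x hx)
    rw [abs_of_pos (inv_pos.2 hfx)]
    exact inv_anti₀ hm (hfm x hx)
  abs_sub_le x hx y hy := by
    have hfx := hm.trans_le (hfm x hx)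
    have hfy := hm.trans_le (hfm y hy)
    have hfxy := hf.abs_sub_le x hx y hy
    rw [inv_sub_inv hfx.ne' hfy.ne', abs_div, abs_sub_comm, abs_of_pos (mul_pos hfx hfy),
      div_mul_eq_mul_div]
    exact div_le_div₀ ((abs_nonneg _).trans hfxy) hfxy (by positivity)
      (sq m ▸ mul_le_mul (hfm x hx) (hfm y hy) hm.le hfx.le)

end

theorem of_affine {s : Set (WithLp 1 (ℝ × ℝ))} {f : WithLp 1 (ℝ × ℝ) → ℝ} {L M p q c : ℝ}
    (hf : ∀ θ, f θ = p * θ.fst + q * θ.snd + c) (hp : |p| ≤ L) (hq : |q| ≤ L)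
    (hM : ∀ θ ∈ s, |f θ| ≤ M) : BoundedLipschitzOn L M f s where
  abs_le := hM
  abs_sub_le θ _ θ' _ := by
    rw [hf, hf, add_sub_add_right_eq_sub]
    exact (abs_affine_sub_le p q θ θ').trans (by gcongr; exact max_le hp hq)

end BoundedLipschitzOn

/-- `WithLp 1` puts the ℓ¹ distance `|α - α'| + |β - β'|` on the parameter plane. -/
def paramSquare (δ : ℝ) : Set (WithLp 1 (ℝ × ℝ)) :=
  {θ | θ.fst ∈ Icc δ (1 - δ) ∧ θ.snd ∈ Icc δ (1 - δ)}

section paramSquare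

variable {δ : ℝ}

theorem boundedLipschitzOn_fst :
    BoundedLipschitzOn 1 (1 - δ) (fun θ => θ.fst) (paramSquare δ) :=
  .of_affine (p := 1) (q := 0) (c := 0) (fun _ => by ring) (by norm_num) (by norm_num)
    fun _ ⟨⟨_, _⟩, _⟩ => abs_le.2 ⟨by linarith, by linarith⟩

theorem boundedLipschitzOn_snd :
    BoundedLipschitzOn 1 (1 - δ) (fun θ => θ.snd) (paramSquare δ) :=
  .of_affine (p := 0) (q := 1) (c := 0) (fun _ => by ring) (by norm_num) (by norm_num)
    fun _ ⟨_, ⟨_, _⟩⟩ => abs_le.2 ⟨by linarith, by linarith⟩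

theorem boundedLipschitzOn_one_sub_fst :
    BoundedLipschitzOn 1 (1 - δ) (fun θ => 1 - θ.fst) (paramSquare δ) :=
  .of_affine (p := -1) (q := 0) (c := 1) (fun _ => by ring) (by norm_num) (by norm_num)
    fun _ ⟨⟨_, _⟩, _⟩ => abs_le.2 ⟨by linarith, by linarith⟩

theorem boundedLipschitzOn_one_sub_snd :
    BoundedLipschitzOn 1 (1 - δ) (fun θ => 1 - θ.snd) (paramSquare δ) :=
  .of_affine (p := 0) (q := -1) (c := 1) (fun _ => by ring) (by norm_num) (by norm_num)
    fun _ ⟨_, ⟨_, _⟩⟩ => abs_le.2 ⟨by linarith, by linarith⟩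

theorem boundedLipschitzOn_fst_add_snd :
    BoundedLipschitzOn 1 (2 - 2 * δ) (fun θ => θ.fst + θ.snd) (paramSquare δ) :=
  .of_affine (p := 1) (q := 1) (c := 0) (fun _ => by ring) (by norm_num) (by norm_num)
    fun _ ⟨⟨_, _⟩, ⟨_, _⟩⟩ => abs_le.2 ⟨by linarith, by linarith⟩

theorem boundedLipschitzOn_fst_add_snd_sub_one :
    BoundedLipschitzOn 1 (1 - 2 * δ) (fun θ => θ.fst + θ.snd - 1) (paramSquare δ) :=
  .of_affine (p := 1) (q := 1) (c := -1) (fun _ => by ring) (by norm_num) (by norm_num)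
    fun _ ⟨⟨_, _⟩, ⟨_, _⟩⟩ => abs_le.2 ⟨by linarith, by linarith⟩

theorem boundedLipschitzOn_one_sub_two_mul_fst_sub_snd :
    BoundedLipschitzOn 2 (2 - 3 * δ) (fun θ => 1 - 2 * θ.fst - θ.snd) (paramSquare δ) :=
  .of_affine (p := -2) (q := -1) (c := 1) (fun _ => by ring) (by norm_num) (by norm_num)
    fun _ ⟨⟨_, _⟩, ⟨_, _⟩⟩ => abs_le.2 ⟨by linarith, by linarith⟩

theorem boundedLipschitzOn_fst_inv (hδ : 0 < δ) :
    BoundedLipschitzOn (1 / δ ^ 2) δ⁻¹ (fun θ => θ.fst⁻¹) (paramSquare δ) :=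
  boundedLipschitzOn_fst.inv hδ fun _ hθ => hθ.1.1

theorem boundedLipschitzOn_fst_add_snd_inv (hδ : 0 < δ) :
    BoundedLipschitzOn (1 / (2 * δ) ^ 2) (2 * δ)⁻¹ (fun θ => (θ.fst + θ.snd)⁻¹)
      (paramSquare δ) :=
  boundedLipschitzOn_fst_add_snd.inv (by positivity) fun _ hθ => by linarith [hθ.1.1, hθ.2.1]

end paramSquare

noncomputable def coeffG0 (θ : WithLp 1 (ℝ × ℝ)) : ℝ :=
  θ.snd * (1 - θ.fst) * (θ.fst + θ.snd)⁻¹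

noncomputable def coeffF0Fhat (θ : WithLp 1 (ℝ × ℝ)) : ℝ :=
  θ.snd * (θ.fst + θ.snd - 1) * θ.fst⁻¹

noncomputable def coeffFhatFhat (θ : WithLp 1 (ℝ × ℝ)) : ℝ :=
  (1 - θ.snd) * (θ.fst + θ.snd) * θ.fst⁻¹

noncomputable def coeffF0F0 (θ : WithLp 1 (ℝ × ℝ)) : ℝ :=
  θ.snd * θ.snd * (1 - 2 * θ.fst - θ.snd) * θ.fst⁻¹ * (θ.fst + θ.snd)⁻¹

section coefficients

variable {δ : ℝ} {θ θ' : WithLp 1 (ℝ × ℝ)}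

theorem abs_coeffG0_sub_le (hδ : 0 < δ) (hθ : θ ∈ paramSquare δ)
    (hθ' : θ' ∈ paramSquare δ) :
    |coeffG0 θ - coeffG0 θ'| ≤ ((1 - δ) / δ + (1 - δ) ^ 2 / (4 * δ ^ 2)) * dist θ θ' :=
  ((boundedLipschitzOn_snd.mul boundedLipschitzOn_one_sub_fst).mul
    (boundedLipschitzOn_fst_add_snd_inv hδ)).abs_sub_le θ hθ θ' hθ' |>.trans_eq
    (by field_simp; ring)

theorem abs_coeffF0Fhat_sub_le (hδ : 0 < δ) (hθ : θ ∈ paramSquare δ)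
    (hθ' : θ' ∈ paramSquare δ) :
    |coeffF0Fhat θ - coeffF0Fhat θ'| ≤
      ((2 - 3 * δ) / δ + (1 - δ) * (1 - 2 * δ) / δ ^ 2) * dist θ θ' :=
  ((boundedLipschitzOn_snd.mul boundedLipschitzOn_fst_add_snd_sub_one).mul
    (boundedLipschitzOn_fst_inv hδ)).abs_sub_le θ hθ θ' hθ' |>.trans_eq
    (by field_simp; ring)

theorem abs_coeffFhatFhat_sub_le (hδ : 0 < δ) (hθ : θ ∈ paramSquare δ)
    (hθ' : θ' ∈ paramSquare δ) :
    |coeffFhatFhat θ - coeffFhatFhat θ'| ≤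
      (3 * (1 - δ) / δ + 2 * (1 - δ) ^ 2 / δ ^ 2) * dist θ θ' :=
  ((boundedLipschitzOn_one_sub_snd.mul boundedLipschitzOn_fst_add_snd).mul
    (boundedLipschitzOn_fst_inv hδ)).abs_sub_le θ hθ θ' hθ' |>.trans_eq
    (by field_simp; ring)

theorem abs_coeffF0F0_sub_le (hδ : 0 < δ) (hθ : θ ∈ paramSquare δ)
    (hθ' : θ' ∈ paramSquare δ) :
    |coeffF0F0 θ - coeffF0F0 θ'| ≤
      ((1 - δ) * (2 - 3 * δ) / δ ^ 2 + (1 - δ) ^ 2 / δ ^ 2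
        + 3 * (1 - δ) ^ 2 * (2 - 3 * δ) / (4 * δ ^ 3)) * dist θ θ' :=
  ((((boundedLipschitzOn_snd.mul boundedLipschitzOn_snd).mul
    boundedLipschitzOn_one_sub_two_mul_fst_sub_snd).mul (boundedLipschitzOn_fst_inv hδ)).mul
    (boundedLipschitzOn_fst_add_snd_inv hδ)).abs_sub_le θ hθ θ' hθ' |>.trans_eq
    (by field_simp; ring)

end coefficients

theorem sum_coeff_lipschitz_constants_le {δ : ℝ} (hδ : 0 < δ) :
    ((1 - δ) / δ + (1 - δ) ^ 2 / (4 * δ ^ 2))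
      + 2 * ((2 - 3 * δ) / δ + (1 - δ) * (1 - 2 * δ) / δ ^ 2)
      + (3 * (1 - δ) / δ + 2 * (1 - δ) ^ 2 / δ ^ 2)
      + ((1 - δ) * (2 - 3 * δ) / δ ^ 2 + (1 - δ) ^ 2 / δ ^ 2
        + 3 * (1 - δ) ^ 2 * (2 - 3 * δ) / (4 * δ ^ 3)) ≤ 2 * δ⁻¹ ^ 3 := by
  field_simp
  nlinarith [mul_pos hδ hδ, mul_pos (mul_pos hδ hδ) hδ]

theorem abs_coeff_combination_sub_le {δ : ℝ} (hδ : 0 < δ)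
    {θ θ' : WithLp 1 (ℝ × ℝ)} (hθ : θ ∈ paramSquare δ) (hθ' : θ' ∈ paramSquare δ)
    {g w p q : ℝ} (hg : |g| ≤ 1) (hw : |w| ≤ 2) (hp : |p| ≤ 1) (hq : |q| ≤ 1) :
    |(coeffG0 θ * g + coeffF0Fhat θ * w + coeffFhatFhat θ * p + coeffF0F0 θ * q)
      - (coeffG0 θ' * g + coeffF0Fhat θ' * w + coeffFhatFhat θ' * p + coeffF0F0 θ' * q)|
      ≤ 2 * δ⁻¹ ^ 3 * dist θ θ' := by
  have h₁ := abs_coeffG0_sub_le hδ hθ hθ'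
  have h₂ := abs_coeffF0Fhat_sub_le hδ hθ hθ'
  have h₃ := abs_coeffFhatFhat_sub_le hδ hθ hθ'
  have h₄ := abs_coeffF0F0_sub_le hδ hθ hθ'
  calc _ = |(coeffG0 θ - coeffG0 θ') * g + (coeffF0Fhat θ - coeffF0Fhat θ') * w
          + (coeffFhatFhat θ - coeffFhatFhat θ') * p + (coeffF0F0 θ - coeffF0F0 θ') * q| := by
        ring_nf
    _ ≤ |coeffG0 θ - coeffG0 θ'| * |g| + |coeffF0Fhat θ - coeffF0Fhat θ'| * |w|
          + |coeffFhatFhat θ - coeffFhatFhat θ'| * |p| + |coeffF0F0 θ - coeffF0F0 θ'| * |q| := by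
        simp only [← abs_mul]
        exact (abs_add_le _ _).trans (add_le_add (abs_add_three _ _ _) le_rfl)
    _ ≤ 2 * δ⁻¹ ^ 3 * dist θ θ' := by
        have e₁ := mul_le_mul h₁ hg (abs_nonneg _) ((abs_nonneg _).trans h₁)
        have e₂ := mul_le_mul h₂ hw (abs_nonneg _) ((abs_nonneg _).trans h₂)
        have e₃ := mul_le_mul h₃ hp (abs_nonneg _) ((abs_nonneg _).trans h₃)
        have e₄ := mul_le_mul h₄ hq (abs_nonneg _) ((abs_nonneg _).trans h₄)
        have hL := mul_le_mul_of_nonneg_right (sum_coeff_lipschitz_constants_le hδ)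
          (dist_nonneg (x := θ) (y := θ'))
        linear_combination e₁ + e₂ + e₃ + e₄ + hL

theorem deviation_bracket_eq {α β : ℝ} (hα : α ≠ 0) (hs : α + β ≠ 0) (g u v a b : ℝ) :
    β * (1 - α) / (α + β) * g
      + α * β / (α + β) * u * ((b - β / (α + β) * v) / (α / (α + β)))
      + α * β / (α + β) * ((a - β / (α + β) * u) / (α / (α + β))) * v
      + α * (1 - β) / (α + β) * ((a - β / (α + β) * u) / (α / (α + β)))
        * ((b - β / (α + β) * v) / (α / (α + β)))
    = coeffG0 (WithLp.toLp 1 (α, β)) * g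
      + coeffF0Fhat (WithLp.toLp 1 (α, β)) * (u * b + a * v)
      + coeffFhatFhat (WithLp.toLp 1 (α, β)) * (a * b)
      + coeffF0F0 (WithLp.toLp 1 (α, β)) * (u * v) := by
  simp only [coeffG0, coeffF0Fhat, coeffFhatFhat, coeffF0F0, WithLp.fst, WithLp.snd]
  field_simp
  ring

theorem empirical_deviation_lipschitz_general
    {E : Type*} (δ : ℝ) (hδ0 : 0 < δ)
    (F0 : E → ℝ) (G0 : E × E → ℝ) (Fhat : E → ℝ) (Ghat : E × E → ℝ)
    (hF0 : ∀ x, F0 x ∈ Set.Icc (0:ℝ) 1)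
    (hFhat : ∀ x, Fhat x ∈ Set.Icc (0:ℝ) 1)
    (hG0 : ∀ z, G0 z ∈ Set.Icc (0:ℝ) 1)
    (Fh1 : ℝ × ℝ → E → ℝ)
    (hFh1 : ∀ (α β : ℝ) (x : E),
      Fh1 (α, β) x = (Fhat x - (β/(α+β)) * F0 x) / (α/(α+β)))
    (Δn : ℝ × ℝ → E × E → ℝ)
    (hΔn : ∀ (α β : ℝ) (x y : E),
      Δn (α, β) (x, y) = Ghat (x,y) - ((β*(1-α)/(α+β)) * G0 (x,y)
        + (α*β/(α+β)) * F0 x * Fh1 (α, β) y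
        + (α*β/(α+β)) * Fh1 (α, β) x * F0 y
        + (α*(1-β)/(α+β)) * Fh1 (α, β) x * Fh1 (α, β) y)) :
    ∀ α β α' β' : ℝ,
      α ∈ Set.Icc δ (1-δ) → β ∈ Set.Icc δ (1-δ) →
      α' ∈ Set.Icc δ (1-δ) → β' ∈ Set.Icc δ (1-δ) →
      ∀ x y : E,
        |Δn (α, β) (x, y) - Δn (α', β') (x, y)|
          ≤ 2 * δ⁻¹^3 * (|α - α'| + |β - β'|) := by
  intro α β α' β' hα hβ hα' hβ' x y
  have unit_abs_le : ∀ t ∈ Icc (0 : ℝ) 1, |t| ≤ 1 := fun _ ht => (abs_of_nonneg ht.1).trans_le ht.2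
  have hw : |F0 x * Fhat y + Fhat x * F0 y| ≤ 2 := by
    have h₁ := unit_abs_le _ (unitInterval.mul_mem (hF0 x) (hFhat y))
    have h₂ := unit_abs_le _ (unitInterval.mul_mem (hFhat x) (hF0 y))
    linarith [abs_add_le (F0 x * Fhat y) (Fhat x * F0 y)]
  have hdist : dist (WithLp.toLp 1 (α, β)) (WithLp.toLp 1 (α', β')) = |α - α'| + |β - β'| :=
    WithLp.prod_dist_eq_of_L1 _ _
  have hpos : ∀ t ∈ Icc δ (1 - δ), 0 < t := fun t ht => hδ0.trans_le ht.1
  rw [hΔn, hΔn, hFh1, hFh1, hFh1, hFh1,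
    deviation_bracket_eq (hpos α hα).ne' (add_pos (hpos α hα) (hpos β hβ)).ne',
    deviation_bracket_eq (hpos α' hα').ne' (add_pos (hpos α' hα') (hpos β' hβ')).ne',
    sub_sub_sub_cancel_left, abs_sub_comm, ← hdist]
  exact abs_coeff_combination_sub_le hδ0 (by exact ⟨hα, hβ⟩) (by exact ⟨hα', hβ'⟩)
    (unit_abs_le _ (hG0 _)) hw
    (unit_abs_le _ (unitInterval.mul_mem (hFhat x) (hFhat y)))
    (unit_abs_le _ (unitInterval.mul_mem (hF0 x) (hF0 y)))

/-- Pointwise Lipschitz property of the empirical deviation Δₙ in θ: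
    |Δₙ(θ,x,y) − Δₙ(θ',x,y)| ≤ 2δ⁻³(|α−α'| + |β−β'|). -/
theorem empirical_deviation_lipschitz
    {E : Type*} (δ : ℝ) (hδ0 : 0 < δ) (hδ : δ < 1/2)
    (F0 : E → ℝ) (G0 : E × E → ℝ) (Fhat : E → ℝ) (Ghat : E × E → ℝ)
    (hF0 : ∀ x, F0 x ∈ Set.Icc (0:ℝ) 1)
    (hFhat : ∀ x, Fhat x ∈ Set.Icc (0:ℝ) 1)
    (hG0 : ∀ z, G0 z ∈ Set.Icc (0:ℝ) 1)
    (Fh1 : ℝ × ℝ → E → ℝ)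
    (hFh1 : ∀ (α β : ℝ) (x : E),
      Fh1 (α, β) x = (Fhat x - (β/(α+β)) * F0 x) / (α/(α+β)))
    (Δn : ℝ × ℝ → E × E → ℝ)
    (hΔn : ∀ (α β : ℝ) (x y : E),
      Δn (α, β) (x, y) = Ghat (x,y) - ((β*(1-α)/(α+β)) * G0 (x,y)
        + (α*β/(α+β)) * F0 x * Fh1 (α, β) y
        + (α*β/(α+β)) * Fh1 (α, β) x * F0 y
        + (α*(1-β)/(α+β)) * Fh1 (α, β) x * Fh1 (α, β) y)) :
    ∀ α β α' β' : ℝ,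
      α ∈ Set.Icc δ (1-δ) → β ∈ Set.Icc δ (1-δ) →
      α' ∈ Set.Icc δ (1-δ) → β' ∈ Set.Icc δ (1-δ) →
      ∀ x y : E,
        |Δn (α, β) (x, y) - Δn (α', β') (x, y)|
          ≤ 2 * δ⁻¹^3 * (|α - α'| + |β - β'|) :=
  empirical_deviation_lipschitz_general δ hδ0 F0 G0 Fhat Ghat hF0 hFhat hG0 Fh1 hFh1 Δn hΔn
end

section
/- Assume F⁰, F¹ and F̂ take values in [0,1] (hence F = p*F⁰ + r*F¹ takes values in [0,1]). Then for every θ = (α,β) ∈ Θ = [δ,1−δ]² and all (x,y) ∈ E × E, |Δₙ(θ,x,y) − Δ(θ,x,y)| ≤ |Ĝ(x,y) − G(x,y)| + (1 + 2b/r) (|F̂(x) − F(x)| + |F̂(y) − F(y)|), and 1 + 2b/r ≤ 1 + 2δ⁻¹. -/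
/-!
Writing `r = α/(α+β)`, the coefficients of the model are `λ₂ = λ₃ = r β` and `λ₄ = r (1 - β)`,
and `F̂¹_θ - F¹_θ = (F̂ - F)/r`. Since `G` cancels from `Δₙ - Δ`, that difference is `Ĝ - G` plus
terms that are linear in `F̂¹_θ - F¹_θ`, with coefficients bounded through `|F⁰| ≤ 1` and
`|F̂¹_θ|, |F¹_θ| ≤ 1/r`; the latter holds because `F` and `F̂` take values in `[0, 1]`.
-/

open Set

lemma abs_sub_bilinear_model_le {g' g c l₂ l₄ a b u v u' v' M : ℝ}
    (ha : |a| ≤ 1) (hb : |b| ≤ 1) (hu' : |u'| ≤ M) (hv : |v| ≤ M) :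
    |(g' - (c + l₂ * a * v' + l₂ * u' * b + l₄ * u' * v'))
        - (g - (c + l₂ * a * v + l₂ * u * b + l₄ * u * v))|
      ≤ |g' - g| + (|l₂| + |l₄| * M) * (|u' - u| + |v' - v|) := by
  have hsplit : (g' - (c + l₂ * a * v' + l₂ * u' * b + l₄ * u' * v'))
        - (g - (c + l₂ * a * v + l₂ * u * b + l₄ * u * v))
      = (g' - g) - l₂ * a * (v' - v) - l₂ * (u' - u) * b - l₄ * (u' * (v' - v) + (u' - u) * v) := by
    ring
  have h₁ : |l₂ * a * (v' - v)| ≤ |l₂| * |v' - v| := by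
    rw [abs_mul, abs_mul]; gcongr; exact mul_le_of_le_one_right (abs_nonneg _) ha
  have h₂ : |l₂ * (u' - u) * b| ≤ |l₂| * |u' - u| := by
    rw [abs_mul, abs_mul]; exact mul_le_of_le_one_right (by positivity) hb
  have h₃ : |l₄ * (u' * (v' - v) + (u' - u) * v)| ≤ |l₄| * (M * (|u' - u| + |v' - v|)) := by
    rw [abs_mul]
    gcongr
    calc |u' * (v' - v) + (u' - u) * v| ≤ |u'| * |v' - v| + |u' - u| * |v| := by
          simpa only [abs_mul] using abs_add_le (u' * (v' - v)) ((u' - u) * v)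
      _ ≤ M * |v' - v| + |u' - u| * M := by gcongr
      _ = M * (|u' - u| + |v' - v|) := by ring
  rw [hsplit]
  have t₁ := abs_sub (g' - g - l₂ * a * (v' - v) - l₂ * (u' - u) * b)
    (l₄ * (u' * (v' - v) + (u' - u) * v))
  have t₂ := abs_sub (g' - g - l₂ * a * (v' - v)) (l₂ * (u' - u) * b)
  have t₃ := abs_sub (g' - g) (l₂ * a * (v' - v))
  linarith

lemma abs_sub_mul_div_le_inv {p r f f₀ : ℝ} (hp : p ∈ Icc (0 : ℝ) 1) (hr : 0 < r)
    (hf : f ∈ Icc (0 : ℝ) 1) (hf₀ : f₀ ∈ Icc (0 : ℝ) 1) : |(f - p * f₀) / r| ≤ r⁻¹ := by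
  have hpf₀ : p * f₀ ∈ Icc (0 : ℝ) 1 := ⟨mul_nonneg hp.1 hf₀.1, mul_le_one₀ hp.2 hf₀.1 hf₀.2⟩
  rw [abs_div, abs_of_pos hr, div_eq_mul_inv]
  refine mul_le_of_le_one_left (inv_nonneg.2 hr.le) (abs_le.2 ⟨?_, ?_⟩) <;>
    linarith [hf.1, hf.2, hpf₀.1, hpf₀.2]

lemma one_sub_div_weight_le_inv {δ α β : ℝ} (hδ : 0 < δ) (hα : δ ≤ α) (hβ : δ ≤ β)
    (hβ₁ : β ≤ 1) : (1 - β) / (α / (α + β)) ≤ δ⁻¹ := by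
  have hα₀ : 0 < α := hδ.trans_le hα
  rw [div_div_eq_mul_div, div_le_iff₀ hα₀, inv_mul_eq_div, le_div_iff₀ hδ]
  have hδ₁ : δ ≤ 1 := hβ.trans hβ₁
  have hsplit : α - (1 - β) * (α + β) * δ
      = α * (1 - β) * (1 - δ) + α * β ^ 2 + (1 - β) * β * (α - δ) := by
    ring
  have h₁ : 0 ≤ α * (1 - β) * (1 - δ) := by
    have := sub_nonneg.2 hβ₁; have := sub_nonneg.2 hδ₁; positivity
  have h₂ : 0 ≤ (1 - β) * β * (α - δ) := by
    have := sub_nonneg.2 hβ₁; have := sub_nonneg.2 hα; have := hδ.le.trans hβ; positivity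
  linarith [mul_nonneg hα₀.le (sq_nonneg β)]

lemma model_coefficient_le {α β t : ℝ} (hα : 0 < α) (hβ : 0 ≤ β) (hβ₁ : β ≤ 1) (ht : 0 ≤ t) :
    (|α * β / (α + β)| + |α * (1 - β) / (α + β)| * (α / (α + β))⁻¹) * (t / (α / (α + β)))
      ≤ (1 + 2 * ((1 - β) / (α / (α + β)))) * t := by
  have hαβ : 0 < α + β := by linarith
  rw [abs_of_nonneg (by positivity), abs_of_nonneg (by have := sub_nonneg.2 hβ₁; positivity)]
  have hkey : (α * β / (α + β) + α * (1 - β) / (α + β) * (α / (α + β))⁻¹) * (t / (α / (α + β)))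
      = β * t + (1 - β) * (α + β) / α * t := by
    field_simp
  have hbt : 0 ≤ (1 - β) * (α + β) / α * t := by
    have := sub_nonneg.2 hβ₁; positivity
  rw [hkey, div_div_eq_mul_div]
  linarith [mul_le_of_le_one_left ht hβ₁]

theorem empirical_vs_true_deviation_bound_general
    {E : Type*} (δ : ℝ) (hδ0 : 0 < δ)
    (F0 F1 : E → ℝ) (G0 : E × E → ℝ) (Fhat : E → ℝ) (Ghat : E × E → ℝ)
    (hF0 : ∀ x, F0 x ∈ Set.Icc (0:ℝ) 1)
    (hF1 : ∀ x, F1 x ∈ Set.Icc (0:ℝ) 1)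
    (hFhat : ∀ x, Fhat x ∈ Set.Icc (0:ℝ) 1)
    (αs βs : ℝ) (hαs : αs ∈ Set.Icc δ (1-δ)) (hβs : βs ∈ Set.Icc δ (1-δ))
    (F : E → ℝ) (hF : ∀ x, F x = (βs/(αs+βs)) * F0 x + (αs/(αs+βs)) * F1 x)
    (G : E × E → ℝ)
    (F1θ : ℝ × ℝ → E → ℝ)
    (hF1θ : ∀ (α β : ℝ) (x : E),
      F1θ (α, β) x = (F x - (β/(α+β)) * F0 x) / (α/(α+β)))
    (Δ : ℝ × ℝ → E × E → ℝ)
    (hΔ : ∀ (α β : ℝ) (x y : E),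
      Δ (α, β) (x, y) = G (x,y) - ((β*(1-α)/(α+β)) * G0 (x,y)
        + (α*β/(α+β)) * F0 x * F1θ (α, β) y
        + (α*β/(α+β)) * F1θ (α, β) x * F0 y
        + (α*(1-β)/(α+β)) * F1θ (α, β) x * F1θ (α, β) y))
    (Fh1 : ℝ × ℝ → E → ℝ)
    (hFh1 : ∀ (α β : ℝ) (x : E),
      Fh1 (α, β) x = (Fhat x - (β/(α+β)) * F0 x) / (α/(α+β)))
    (Δn : ℝ × ℝ → E × E → ℝ)
    (hΔn : ∀ (α β : ℝ) (x y : E),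
      Δn (α, β) (x, y) = Ghat (x,y) - ((β*(1-α)/(α+β)) * G0 (x,y)
        + (α*β/(α+β)) * F0 x * Fh1 (α, β) y
        + (α*β/(α+β)) * Fh1 (α, β) x * F0 y
        + (α*(1-β)/(α+β)) * Fh1 (α, β) x * Fh1 (α, β) y)) :
    ∀ α β : ℝ, α ∈ Set.Icc δ (1-δ) → β ∈ Set.Icc δ (1-δ) →
      (∀ x y : E,
        |Δn (α, β) (x, y) - Δ (α, β) (x, y)|
          ≤ |Ghat (x,y) - G (x,y)|
            + (1 + 2 * ((1-β) / (α/(α+β)))) * (|Fhat x - F x| + |Fhat y - F y|))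
      ∧ 1 + 2 * ((1-β) / (α/(α+β))) ≤ 1 + 2 * δ⁻¹ := by
  rintro α β ⟨hδα, -⟩ ⟨hδβ, hβδ⟩
  have hβ₁ : β ≤ 1 := by linarith
  have hα : 0 < α := hδ0.trans_le hδα
  have hβ : 0 < β := hδ0.trans_le hδβ
  have hr : 0 < α / (α + β) := by positivity
  have hp : β / (α + β) ∈ Icc (0 : ℝ) 1 := ⟨by positivity, by rw [div_le_one (by linarith)]; linarith⟩
  have hFmem (z : E) : F z ∈ Icc (0 : ℝ) 1 := by
    have hs : 0 < αs + βs := by linarith [hαs.1, hβs.1]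
    rw [hF z]
    refine convex_Icc (0 : ℝ) 1 (hF0 z) (hF1 z) (div_nonneg (by linarith [hβs.1]) hs.le)
      (div_nonneg (by linarith [hαs.1]) hs.le) ?_
    rw [← add_div, add_comm, div_self hs.ne']
  have hF0_abs (z : E) : |F0 z| ≤ 1 := abs_le.2 ⟨by linarith [(hF0 z).1], (hF0 z).2⟩
  have hdiff_abs (z : E) :
      |Fh1 (α, β) z - F1θ (α, β) z| = |Fhat z - F z| / (α / (α + β)) := by
    rw [hFh1, hF1θ, ← sub_div, sub_sub_sub_cancel_right, abs_div, abs_of_pos hr]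
  refine ⟨fun x y => ?_, by gcongr; exact one_sub_div_weight_le_inv hδ0 hδα hδβ hβ₁⟩
  rw [hΔn, hΔ]
  refine (abs_sub_bilinear_model_le (M := (α / (α + β))⁻¹) (hF0_abs x) (hF0_abs y)
    (by rw [hFh1]; exact abs_sub_mul_div_le_inv hp hr (hFhat x) (hF0 x))
    (by rw [hF1θ]; exact abs_sub_mul_div_le_inv hp hr (hFmem y) (hF0 y))).trans ?_
  rw [hdiff_abs, hdiff_abs, ← add_div]
  exact add_le_add_right (model_coefficient_le hα hβ.le hβ₁ (by positivity)) _

/-- Pointwise comparison of the empirical and theoretical deviations: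
    |Δₙ(θ,x,y) − Δ(θ,x,y)| ≤ |Ĝ−G|(x,y) + (1+2b/r)(|F̂−F|(x)+|F̂−F|(y)),
    with 1 + 2b/r ≤ 1 + 2δ⁻¹. -/
theorem empirical_vs_true_deviation_bound
    {E : Type*} (δ : ℝ) (hδ0 : 0 < δ) (hδ : δ < 1/2)
    (F0 F1 : E → ℝ) (G0 : E × E → ℝ) (Fhat : E → ℝ) (Ghat : E × E → ℝ)
    (hF0 : ∀ x, F0 x ∈ Set.Icc (0:ℝ) 1)
    (hF1 : ∀ x, F1 x ∈ Set.Icc (0:ℝ) 1)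
    (hFhat : ∀ x, Fhat x ∈ Set.Icc (0:ℝ) 1)
    (αs βs : ℝ) (hαs : αs ∈ Set.Icc δ (1-δ)) (hβs : βs ∈ Set.Icc δ (1-δ))
    (F : E → ℝ) (hF : ∀ x, F x = (βs/(αs+βs)) * F0 x + (αs/(αs+βs)) * F1 x)
    (G : E × E → ℝ)
    (hG : ∀ x y, G (x,y) = (βs*(1-αs)/(αs+βs)) * G0 (x,y)
        + (αs*βs/(αs+βs)) * F0 x * F1 y
        + (αs*βs/(αs+βs)) * F1 x * F0 y
        + (αs*(1-βs)/(αs+βs)) * F1 x * F1 y)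
    (F1θ : ℝ × ℝ → E → ℝ)
    (hF1θ : ∀ (α β : ℝ) (x : E),
      F1θ (α, β) x = (F x - (β/(α+β)) * F0 x) / (α/(α+β)))
    (Δ : ℝ × ℝ → E × E → ℝ)
    (hΔ : ∀ (α β : ℝ) (x y : E),
      Δ (α, β) (x, y) = G (x,y) - ((β*(1-α)/(α+β)) * G0 (x,y)
        + (α*β/(α+β)) * F0 x * F1θ (α, β) y
        + (α*β/(α+β)) * F1θ (α, β) x * F0 y
        + (α*(1-β)/(α+β)) * F1θ (α, β) x * F1θ (α, β) y))
    (Fh1 : ℝ × ℝ → E → ℝ)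
    (hFh1 : ∀ (α β : ℝ) (x : E),
      Fh1 (α, β) x = (Fhat x - (β/(α+β)) * F0 x) / (α/(α+β)))
    (Δn : ℝ × ℝ → E × E → ℝ)
    (hΔn : ∀ (α β : ℝ) (x y : E),
      Δn (α, β) (x, y) = Ghat (x,y) - ((β*(1-α)/(α+β)) * G0 (x,y)
        + (α*β/(α+β)) * F0 x * Fh1 (α, β) y
        + (α*β/(α+β)) * Fh1 (α, β) x * F0 y
        + (α*(1-β)/(α+β)) * Fh1 (α, β) x * Fh1 (α, β) y)) :
    ∀ α β : ℝ, α ∈ Set.Icc δ (1-δ) → β ∈ Set.Icc δ (1-δ) →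
      (∀ x y : E,
        |Δn (α, β) (x, y) - Δ (α, β) (x, y)|
          ≤ |Ghat (x,y) - G (x,y)|
            + (1 + 2 * ((1-β) / (α/(α+β)))) * (|Fhat x - F x| + |Fhat y - F y|))
      ∧ 1 + 2 * ((1-β) / (α/(α+β))) ≤ 1 + 2 * δ⁻¹ :=
  empirical_vs_true_deviation_bound_general δ hδ0 F0 F1 G0 Fhat Ghat hF0 hF1 hFhat αs βs hαs hβs F
    hF G F1θ hF1θ Δ hΔ Fh1 hFh1 Δn hΔn
end

section
/- Let 0 < δ < 1/2, let (α̂,β̂) and (α*,β*) belong to [δ,1−δ]², and let F⁰, F̂ : E → ℝ take values in [0,1]. With p̂ = β̂/(α̂+β̂), r̂ = α̂/(α̂+β̂), p* = β*/(α*+β*), r* = α*/(α*+β*), F̂¹ = (F̂ − p̂F⁰)/r̂ and F¹ = (F − p*F⁰)/r* for an arbitrary function F : E → ℝ, one has sup_{x ∈ E} |F̂¹(x) − F¹(x)| ≤ (1/r*)·sup_{x ∈ E} |F̂(x) − F(x)| + (√2/δ²)·√((α̂−α*)² + (β̂−β*)²). In particular |β̂/α̂ − β*/α*| ≤ (√2/δ²)·√((α̂−α*)²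 + (β̂−β*)²). -/
/-!
Writing `κ = β/α`, the inversion `(G − p F⁰)/r` with `p = β/(α+β)`, `r = α/(α+β)` equals
`G + κ (G − F⁰)`. Hence `F̂¹ − F¹ = (F̂ − F)/r* + (κ̂ − κ*)(F̂ − F⁰)`, and since `|F̂ − F⁰| ≤ 1`
the two sup-norms differ by at most `|κ̂ − κ*|`. Finally
`κ̂ − κ* = (α*(β̂ − β*) − β*(α̂ − α*))/(α̂ α*)`, whose numerator is at most `|α̂ − α*| + |β̂ − β*|`
and whose denominator is at least `δ²`; Cauchy–Schwarz turns the ℓ¹ norm into `√2` times the ℓ² norm.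
-/

lemma abs_add_abs_le_sqrt_two_mul_sqrt (a b : ℝ) :
    |a| + |b| ≤ √2 * √(a ^ 2 + b ^ 2) := by
  rw [← Real.sqrt_mul zero_le_two, ← Real.sqrt_sq (by positivity : 0 ≤ |a| + |b|)]
  apply Real.sqrt_le_sqrt
  nlinarith [sq_nonneg (|a| - |b|), sq_abs a, sq_abs b]

lemma abs_div_sub_div_le {δ a b a' b' : ℝ} (hδ : 0 < δ) (ha : δ ≤ a) (ha' : δ ≤ a')
    (ha'1 : a' ≤ 1) (hb' : |b'| ≤ 1) :
    |b / a - b' / a'| ≤ √2 / δ ^ 2 * √((a - a') ^ 2 + (b - b') ^ 2) := by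
  have ha0 : 0 < a := hδ.trans_le ha
  have ha'0 : 0 < a' := hδ.trans_le ha'
  have hnum : |a' * (b - b') - b' * (a - a')| ≤ |a - a'| + |b - b'| :=
    calc |a' * (b - b') - b' * (a - a')|
        ≤ |a'| * |b - b'| + |b'| * |a - a'| := by
          rw [← abs_mul, ← abs_mul]; exact abs_sub _ _
      _ ≤ 1 * |b - b'| + 1 * |a - a'| := by
          gcongr; rwa [abs_of_pos ha'0]
      _ = |a - a'| + |b - b'| := by ring
  calc |b / a - b' / a'|
      = |a' * (b - b') - b' * (a - a')| / (a * a') := by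
        rw [← abs_of_pos (mul_pos ha0 ha'0), ← abs_div]
        congr 1; field_simp; ring
    _ ≤ (|a - a'| + |b - b'|) / δ ^ 2 := by
        gcongr
        rw [sq]; exact mul_le_mul ha ha' hδ.le ha0.le
    _ ≤ √2 * √((a - a') ^ 2 + (b - b') ^ 2) / δ ^ 2 := by
        gcongr; exact abs_add_abs_le_sqrt_two_mul_sqrt _ _
    _ = √2 / δ ^ 2 * √((a - a') ^ 2 + (b - b') ^ 2) := by ring

lemma mixture_inversion_eq {α β G H : ℝ} (hα : α ≠ 0) (hαβ : α + β ≠ 0) :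
    (G - β / (α + β) * H) / (α / (α + β)) = G + β / α * (G - H) := by
  field_simp; ring

/-- A real `⨆` is the junk value `0` when unbounded, but boundedness is shared by functions at
bounded distance, so no boundedness hypothesis is needed. -/
lemma Real.iSup_le_iSup_add_of_abs_sub_le {E : Type*} {f g : E → ℝ} {K : ℝ} (hK : 0 ≤ K)
    (h : ∀ x, |f x - g x| ≤ K) : ⨆ x, f x ≤ (⨆ x, g x) + K := by
  rcases isEmpty_or_nonempty E with hE | hE
  · simpa [Real.iSup_of_isEmpty] using hK
  by_cases hg : BddAbove (Set.range g)
  · exact ciSup_le fun x => by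
      linarith [le_ciSup hg x, (abs_le.mp (h x)).2]
  · have hf : ¬ BddAbove (Set.range f) := by
      rintro ⟨M, hM⟩
      refine hg ⟨M + K, ?_⟩
      rintro _ ⟨x, rfl⟩
      linarith [hM ⟨x, rfl⟩, (abs_le.mp (h x)).1]
    rw [Real.iSup_of_not_bddAbove hf, Real.iSup_of_not_bddAbove hg, zero_add]
    exact hK

theorem plugin_estimator_sup_bound_general
    {E : Type*} (δ : ℝ) (hδ0 : 0 < δ)
    (αh βh αs βs : ℝ)
    (hαh : αh ∈ Set.Icc δ (1-δ)) (hβh : βh ∈ Set.Icc δ (1-δ))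
    (hαs : αs ∈ Set.Icc δ (1-δ)) (hβs : βs ∈ Set.Icc δ (1-δ))
    (F0 Fhat : E → ℝ)
    (hF0 : ∀ x, F0 x ∈ Set.Icc (0:ℝ) 1)
    (hFhat : ∀ x, Fhat x ∈ Set.Icc (0:ℝ) 1)
    (F : E → ℝ)
    (ph rh ps rs : ℝ)
    (hph : ph = βh/(αh+βh)) (hrh : rh = αh/(αh+βh))
    (hps : ps = βs/(αs+βs)) (hrs : rs = αs/(αs+βs))
    (Fh1 F1 : E → ℝ)
    (hFh1 : ∀ x, Fh1 x = (Fhat x - ph * F0 x)/rh)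
    (hF1 : ∀ x, F1 x = (F x - ps * F0 x)/rs) :
    (⨆ x : E, |Fh1 x - F1 x|)
      ≤ (1/rs) * (⨆ x : E, |Fhat x - F x|)
        + (Real.sqrt 2 / δ^2) * Real.sqrt ((αh - αs)^2 + (βh - βs)^2)
    ∧ |βh/αh - βs/αs|
      ≤ (Real.sqrt 2 / δ^2) * Real.sqrt ((αh - αs)^2 + (βh - βs)^2) := by
  obtain ⟨hαh1, -⟩ := hαh
  obtain ⟨hβh1, -⟩ := hβh
  obtain ⟨hαs1, hαs2⟩ := hαs
  obtain ⟨hβs1, hβs2⟩ := hβs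
  have hκ := abs_div_sub_div_le (b := βh) hδ0 hαh1 hαs1 (by linarith)
    (abs_le.mpr ⟨by linarith, by linarith⟩)
  refine ⟨?_, hκ⟩
  have hrs0 : 0 < rs := by rw [hrs]; exact div_pos (by linarith) (by linarith)
  have hdiff : ∀ x,
      Fh1 x - F1 x = 1 / rs * (Fhat x - F x) + (βh / αh - βs / αs) * (Fhat x - F0 x) := by
    intro x
    have hαh0 : αh ≠ 0 := by linarith
    have hαs0 : αs ≠ 0 := by linarith
    rw [hFh1, hF1, hph, hrh, hps, hrs, mixture_inversion_eq, mixture_inversion_eq]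
    · field_simp; ring
    all_goals linarith
  have hclose : ∀ x, |(|Fh1 x - F1 x|) - (1 / rs * |Fhat x - F x|)| ≤ |βh / αh - βs / αs| := by
    intro x
    have hF : |Fhat x - F0 x| ≤ 1 :=
      abs_sub_le_of_nonneg_of_le (hFhat x).1 (hFhat x).2 (hF0 x).1 (hF0 x).2
    rw [← abs_of_pos (one_div_pos.mpr hrs0), ← abs_mul]
    refine (abs_abs_sub_abs_le_abs_sub _ _).trans ?_
    rw [hdiff, add_sub_cancel_left, abs_mul]
    exact mul_le_of_le_one_right (abs_nonneg _) hF
  calc (⨆ x, |Fh1 x - F1 x|) ≤ (⨆ x, 1 / rs * |Fhat x - F x|) + |βh / αh - βs / αs| :=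
        Real.iSup_le_iSup_add_of_abs_sub_le (abs_nonneg _) hclose
    _ ≤ _ := by rw [Real.mul_iSup_of_nonneg (one_div_pos.mpr hrs0).le]; gcongr

/-- Sup-norm bound for the plug-in estimator of F¹:
    ‖F̂¹ − F¹‖∞ ≤ (1/r*)‖F̂ − F‖∞ + (√2/δ²)‖θ̂ − θ*‖, and the parametric part
    |β̂/α̂ − β*/α*| ≤ (√2/δ²)‖θ̂ − θ*‖. -/
theorem plugin_estimator_sup_bound
    {E : Type*} (δ : ℝ) (hδ0 : 0 < δ) (hδ : δ < 1/2)
    (αh βh αs βs : ℝ)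
    (hαh : αh ∈ Set.Icc δ (1-δ)) (hβh : βh ∈ Set.Icc δ (1-δ))
    (hαs : αs ∈ Set.Icc δ (1-δ)) (hβs : βs ∈ Set.Icc δ (1-δ))
    (F0 Fhat : E → ℝ)
    (hF0 : ∀ x, F0 x ∈ Set.Icc (0:ℝ) 1)
    (hFhat : ∀ x, Fhat x ∈ Set.Icc (0:ℝ) 1)
    (F : E → ℝ)
    (ph rh ps rs : ℝ)
    (hph : ph = βh/(αh+βh)) (hrh : rh = αh/(αh+βh))
    (hps : ps = βs/(αs+βs)) (hrs : rs = αs/(αs+βs))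
    (Fh1 F1 : E → ℝ)
    (hFh1 : ∀ x, Fh1 x = (Fhat x - ph * F0 x)/rh)
    (hF1 : ∀ x, F1 x = (F x - ps * F0 x)/rs) :
    (⨆ x : E, |Fh1 x - F1 x|)
      ≤ (1/rs) * (⨆ x : E, |Fhat x - F x|)
        + (Real.sqrt 2 / δ^2) * Real.sqrt ((αh - αs)^2 + (βh - βs)^2)
    ∧ |βh/αh - βs/αs|
      ≤ (Real.sqrt 2 / δ^2) * Real.sqrt ((αh - αs)^2 + (βh - βs)^2) :=
  plugin_estimator_sup_bound_general δ hδ0 αh βh αs βs hαh hβh hαs hβs F0 Fhat hF0 hFhat F ph rh ps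
    rs hph hrh hps hrs Fh1 F1 hFh1 hF1
end

section
/- Let (S, 𝓢, H) be a probability space on a product set E × E, let F, F̂, F⁰ : E → ℝ be bounded measurable, G, Ĝ : E × E → ℝ bounded measurable, T₁ : E × E → ℝ bounded measurable, and n > 0. Define 𝔽 = √n(F̂−F), 𝔾 = √n(Ĝ−G), T₂ = (F−F⁰)⊗(F−F⁰), T̂₂ = (F̂−F⁰)⊗(F̂−F⁰), T₃ = G−F⊗F, T̂₃ = Ĝ−F̂⊗F̂, and for v = (v₁,v₂) ∈ ℝ² let D₁(v) = 2∫T₁(v₁T₁+v₂T₂+T₃)dH and D̂₁(v) = 2∫T₁(v₁T₁+v₂T̂₂+T̂₃)dH be the first coordinates of the gradients of the two quadratic contrasts. Then for every v ∈ ℝ²: √n·(D₁(v) − D̂₁(v)) = 2∫( −T₁𝔾 + T₁(A_v⊗𝔽 + 𝔽⊗A_v) )dH + (2(1−v₂)/√n)·∫ T₁·(𝔽⊗𝔽) dH, where A_v = v₂(F⁰−F) + F. -/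
/-!
The identity holds pointwise. Both `T₂` and `T₃` change by a product, and with `yᵢ = xᵢ + 𝔽ᵢ / √n`
the rescaled change `√n (x₁ x₂ - y₁ y₂)` is `-(x₁ 𝔽₂ + 𝔽₁ x₂) - 𝔽₁ 𝔽₂ / √n`; the two quadratic
remainders enter with weights `v₂` and `-1`, giving the `(1 - v₂) / √n` term. All integrands are
bounded and measurable, hence integrable, so the pointwise identity passes through the integral.
-/

open MeasureTheory

def BoundedMeasurable {α : Type*} [MeasurableSpace α] (f : α → ℝ) : Prop :=
  Measurable f ∧ ∃ C, ∀ x, |f x| ≤ C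

namespace BoundedMeasurable

variable {α β : Type*} [MeasurableSpace α] [MeasurableSpace β] {f g : α → ℝ}

lemma const_mul (hf : BoundedMeasurable f) (c : ℝ) : BoundedMeasurable fun x => c * f x := by
  obtain ⟨hfm, C, hC⟩ := hf
  refine ⟨hfm.const_mul c, |c| * C, fun x => ?_⟩
  rw [abs_mul]
  exact mul_le_mul_of_nonneg_left (hC x) (abs_nonneg c)

lemma add (hf : BoundedMeasurable f) (hg : BoundedMeasurable g) :
    BoundedMeasurable fun x => f x + g x := by
  obtain ⟨hfm, C, hC⟩ := hf
  obtain ⟨hgm, D, hD⟩ := hg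
  exact ⟨hfm.add hgm, C + D, fun x => (abs_add_le _ _).trans (add_le_add (hC x) (hD x))⟩

lemma neg (hf : BoundedMeasurable f) : BoundedMeasurable fun x => -f x := by
  simpa only [neg_one_mul] using hf.const_mul (-1)

lemma sub (hf : BoundedMeasurable f) (hg : BoundedMeasurable g) :
    BoundedMeasurable fun x => f x - g x := by
  simpa only [sub_eq_add_neg] using hf.add hg.neg

lemma mul (hf : BoundedMeasurable f) (hg : BoundedMeasurable g) :
    BoundedMeasurable fun x => f x * g x := by
  obtain ⟨hfm, C, hC⟩ := hf
  obtain ⟨hgm, D, hD⟩ := hg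
  refine ⟨hfm.mul hgm, C * D, fun x => ?_⟩
  rw [abs_mul]
  exact mul_le_mul (hC x) (hD x) (abs_nonneg _) ((abs_nonneg _).trans (hC x))

lemma comp {f : β → ℝ} (hf : BoundedMeasurable f) {g : α → β} (hg : Measurable g) :
    BoundedMeasurable fun x => f (g x) := by
  obtain ⟨hfm, C, hC⟩ := hf
  exact ⟨hfm.comp hg, C, fun x => hC (g x)⟩

lemma mul_prod {f : α → ℝ} {g : β → ℝ} (hf : BoundedMeasurable f) (hg : BoundedMeasurable g) :
    BoundedMeasurable fun z : α × β => f z.1 * g z.2 :=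
  (hf.comp measurable_fst).mul (hg.comp measurable_snd)

lemma integrable (hf : BoundedMeasurable f) (μ : Measure α) [IsFiniteMeasure μ] :
    Integrable f μ := by
  obtain ⟨hfm, C, hC⟩ := hf
  exact .of_bound hfm.aestronglyMeasurable C (ae_of_all _ hC)

end BoundedMeasurable

lemma mul_sub_mul_eq_of_scaled_increments {s : ℝ} (hs : s ≠ 0) (x₁ x₂ y₁ y₂ : ℝ) :
    s * (x₁ * x₂ - y₁ * y₂) =
      -(x₁ * (s * (y₂ - x₂)) + s * (y₁ - x₁) * x₂) - s * (y₁ - x₁) * (s * (y₂ - x₂)) / s := by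
  field_simp
  ring

lemma gradient_integrand_expansion {s : ℝ} (hs : s ≠ 0) (t v₁ v₂ f₁ f₂ g fh₁ fh₂ gh c₁ c₂ : ℝ) :
    s * (t * (v₁ * t + v₂ * ((f₁ - c₁) * (f₂ - c₂)) + (g - f₁ * f₂))
        - t * (v₁ * t + v₂ * ((fh₁ - c₁) * (fh₂ - c₂)) + (gh - fh₁ * fh₂))) =
      -(t * (s * (gh - g)))
        + t * ((v₂ * (c₁ - f₁) + f₁) * (s * (fh₂ - f₂)) + s * (fh₁ - f₁) * (v₂ * (c₂ - f₂) + f₂))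
        + (1 - v₂) / s * (t * (s * (fh₁ - f₁) * (s * (fh₂ - f₂)))) := by
  have h₂ := mul_sub_mul_eq_of_scaled_increments hs (f₁ - c₁) (f₂ - c₂) (fh₁ - c₁) (fh₂ - c₂)
  have h₃ := mul_sub_mul_eq_of_scaled_increments hs f₁ f₂ fh₁ fh₂
  linear_combination t * v₂ * h₂ - t * h₃

/-- Exact algebraic expansion of the first coordinate of the gradient
    difference √n(∇𝚍 − ∇𝚍ₙ) used in the asymptotic normality proof. -/
theorem gradient_difference_first_coordinate
    {E : Type*} [MeasurableSpace E] (H : Measure (E × E)) [IsProbabilityMeasure H]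
    (n : ℝ) (hn : 0 < n)
    (F Fhat F0 : E → ℝ) (G Ghat : E × E → ℝ) (T1 : E × E → ℝ)
    (hFm : Measurable F) (hFhm : Measurable Fhat) (hF0m : Measurable F0)
    (hGm : Measurable G) (hGhm : Measurable Ghat) (hT1m : Measurable T1)
    (C : ℝ)
    (hFb : ∀ x, |F x| ≤ C) (hFhb : ∀ x, |Fhat x| ≤ C) (hF0b : ∀ x, |F0 x| ≤ C)
    (hGb : ∀ z, |G z| ≤ C) (hGhb : ∀ z, |Ghat z| ≤ C) (hT1b : ∀ z, |T1 z| ≤ C)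
    (Fn : E → ℝ) (hFn : ∀ x, Fn x = Real.sqrt n * (Fhat x - F x))
    (Gn : E × E → ℝ) (hGn : ∀ z, Gn z = Real.sqrt n * (Ghat z - G z))
    (T2 T2hat T3 T3hat : E × E → ℝ)
    (hT2 : ∀ z : E × E, T2 z = (F z.1 - F0 z.1) * (F z.2 - F0 z.2))
    (hT2h : ∀ z : E × E, T2hat z = (Fhat z.1 - F0 z.1) * (Fhat z.2 - F0 z.2))
    (hT3 : ∀ z : E × E, T3 z = G z - F z.1 * F z.2)
    (hT3h : ∀ z : E × E, T3hat z = Ghat z - Fhat z.1 * Fhat z.2)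
    (D1 D1hat : ℝ × ℝ → ℝ)
    (hD1 : ∀ v : ℝ × ℝ, D1 v = 2 * ∫ z, T1 z * (v.1 * T1 z + v.2 * T2 z + T3 z) ∂H)
    (hD1h : ∀ v : ℝ × ℝ,
      D1hat v = 2 * ∫ z, T1 z * (v.1 * T1 z + v.2 * T2hat z + T3hat z) ∂H)
    (A : ℝ × ℝ → E → ℝ)
    (hA : ∀ (v : ℝ × ℝ) (x : E), A v x = v.2 * (F0 x - F x) + F x) :
    ∀ v : ℝ × ℝ, Real.sqrt n * (D1 v - D1hat v) =
      2 * (∫ z, (- (T1 z * Gn z)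
            + T1 z * (A v z.1 * Fn z.2 + Fn z.1 * A v z.2)) ∂H)
      + (2 * (1 - v.2) / Real.sqrt n) * ∫ z, T1 z * (Fn z.1 * Fn z.2) ∂H := by
  intro v
  have hs : Real.sqrt n ≠ 0 := (Real.sqrt_pos.2 hn).ne'
  have bF : BoundedMeasurable F := ⟨hFm, C, hFb⟩
  have bFh : BoundedMeasurable Fhat := ⟨hFhm, C, hFhb⟩
  have bF0 : BoundedMeasurable F0 := ⟨hF0m, C, hF0b⟩
  have bG : BoundedMeasurable G := ⟨hGm, C, hGb⟩
  have bGh : BoundedMeasurable Ghat := ⟨hGhm, C, hGhb⟩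
  have bT1 : BoundedMeasurable T1 := ⟨hT1m, C, hT1b⟩
  have bFn : BoundedMeasurable Fn := funext hFn ▸ (bFh.sub bF).const_mul _
  have bGn : BoundedMeasurable Gn := funext hGn ▸ (bGh.sub bG).const_mul _
  have bA : BoundedMeasurable (A v) := funext (hA v) ▸ ((bF0.sub bF).const_mul _).add bF
  have bT2 : BoundedMeasurable T2 := funext hT2 ▸ (bF.sub bF0).mul_prod (bF.sub bF0)
  have bT2h : BoundedMeasurable T2hat :=
    funext hT2h ▸ (bFh.sub bF0).mul_prod (bFh.sub bF0)
  have bT3 : BoundedMeasurable T3 := funext hT3 ▸ bG.sub (bF.mul_prod bF)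
  have bT3h : BoundedMeasurable T3hat := funext hT3h ▸ bGh.sub (bFh.mul_prod bFh)
  have iD := (bT1.mul (((bT1.const_mul v.1).add (bT2.const_mul v.2)).add bT3)).integrable H
  have iDh := (bT1.mul (((bT1.const_mul v.1).add (bT2h.const_mul v.2)).add bT3h)).integrable H
  have iLin := (bT1.mul bGn).neg.add (bT1.mul ((bA.mul_prod bFn).add (bFn.mul_prod bA)))
    |>.integrable H
  have iQuad := (bT1.mul (bFn.mul_prod bFn)).integrable H
  calc Real.sqrt n * (D1 v - D1hat v)
      = 2 * ∫ z, Real.sqrt n * (T1 z * (v.1 * T1 z + v.2 * T2 z + T3 z)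
          - T1 z * (v.1 * T1 z + v.2 * T2hat z + T3hat z)) ∂H := by
        rw [hD1, hD1h, integral_const_mul, integral_sub iD iDh]
        ring
    _ = 2 * ∫ z, ((- (T1 z * Gn z) + T1 z * (A v z.1 * Fn z.2 + Fn z.1 * A v z.2))
          + (1 - v.2) / Real.sqrt n * (T1 z * (Fn z.1 * Fn z.2))) ∂H := by
        congr 1
        refine integral_congr_ae (ae_of_all _ fun z => ?_)
        simp only [hT2, hT2h, hT3, hT3h, hGn, hFn, hA]
        exact gradient_integrand_expansion hs ..
    _ = _ := by
        rw [integral_add iLin (iQuad.const_mul _), integral_const_mul]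
        ring
end
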